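/- arXiv:1805.00259 — 3 statements merged into one kernel-verified Lean document; each statement's English description precedes it below -/
import Mathlib

section
/- Assume f : ℝ → ℝ satisfies (f1) and (f5). Then the function t ↦ f(t)t − 4F(t) is strictly increasing on [0, ∞), where F(t) := ∫₀^t f(τ) dτ. -/
open MeasureTheory Filter Set Real

noncomputable section

/-- Euclidean space ℝ³. -/
abbrev E3 : Type := EuclideanSpace ℝ (Fin 3)

/-- Membership in the Sobolev space H¹(ℝ³): `u` and its gradient are in L². -/
def MemH1 (u : E3 → ℝ) : Prop :=
  MemLp u 2 (volume : Measure E3) ∧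
  MemLp (fun x => ‖gradient u x‖) 2 (volume : Measure E3)

/-- `u` is a radial function. -/
def Radial (u : E3 → ℝ) : Prop := ∀ x y : E3, ‖x‖ = ‖y‖ → u x = u y

/-- The Newtonian potential φ_u, solving −Δφ = u² in ℝ³. -/
def phiP (u : E3 → ℝ) (x : E3) : ℝ := (1 / (4 * π)) * ∫ y, u y ^ 2 / ‖x - y‖

/-- F(t) = ∫₀ᵗ f(τ) dτ. -/
def Fprim (f : ℝ → ℝ) (t : ℝ) : ℝ := ∫ τ in (0:ℝ)..t, f τ

/-- The energy functional I. -/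
def energy (f : ℝ → ℝ) (lam : ℝ) (u : E3 → ℝ) : ℝ :=
  (1/2) * (∫ x, (‖gradient u x‖ ^ 2 + u x ^ 2)) +
  (lam/4) * (∫ x, phiP u x * u x ^ 2) -
  ∫ x, Fprim f (u x)

/-- The derivative I'(u)[v]. -/
def Iprime (f : ℝ → ℝ) (lam : ℝ) (u v : E3 → ℝ) : ℝ :=
  (∫ x, ((inner ℝ (gradient u x) (gradient v x) : ℝ) + u x * v x)) +
  lam * (∫ x, phiP u x * u x * v x) -
  ∫ x, f (u x) * v x

/-- Positive part u⁺ = max{u,0}. -/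
def pPart (u : E3 → ℝ) : E3 → ℝ := fun x => max (u x) 0

/-- Negative part u⁻ = min{u,0}. -/
def nPart (u : E3 → ℝ) : E3 → ℝ := fun x => min (u x) 0

/-- `u` vanishes almost everywhere (i.e. `u ≡ 0` as an element of H¹). -/
def AeZero (u : E3 → ℝ) : Prop := u =ᵐ[(volume : Measure E3)] (fun _ => (0:ℝ))

/-- The squared H¹ norm. -/
def H1normSq (u : E3 → ℝ) : ℝ := ∫ x, (‖gradient u x‖ ^ 2 + u x ^ 2)

/-- The Nehari set N. -/
def nehari (f : ℝ → ℝ) (lam : ℝ) : Set (E3 → ℝ) :=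
  {u | MemH1 u ∧ Radial u ∧ ¬ AeZero u ∧ Iprime f lam u u = 0}

/-- The nodal Nehari set M. -/
def nodalNehari (f : ℝ → ℝ) (lam : ℝ) : Set (E3 → ℝ) :=
  {u | MemH1 u ∧ Radial u ∧ Iprime f lam u u = 0 ∧ Iprime f lam u (pPart u) = 0 ∧
       ¬ AeZero (pPart u) ∧ ¬ AeZero (nPart u)}

/-- (f1): continuity. -/
def F1 (f : ℝ → ℝ) : Prop := Continuous f

/-- (f2): oddness. -/
def F2 (f : ℝ → ℝ) : Prop := ∀ t : ℝ, f (-t) = - f t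

/-- (f3): lim_{t→0} f(t)/t = 0. -/
def F3 (f : ℝ → ℝ) : Prop := Tendsto (fun t => f t / t) (nhdsWithin 0 {(0:ℝ)}ᶜ) (nhds 0)

/-- (f4): lim_{t→∞} f(t)/t³ = 1 and f(t)/t³ < 1 for t ≠ 0. -/
def F4 (f : ℝ → ℝ) : Prop :=
  Tendsto (fun t => f t / t ^ 3) atTop (nhds 1) ∧ ∀ t : ℝ, t ≠ 0 → f t / t ^ 3 < 1

/-- (f5): t ↦ f(t)/t³ strictly increasing on (0,∞). -/
def F5 (f : ℝ → ℝ) : Prop := StrictMonoOn (fun t => f t / t ^ 3) (Set.Ioi 0)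

/-- (f6): f(t)t − 4F(t) → +∞ as t → ∞. -/
def F6 (f : ℝ → ℝ) : Prop := Tendsto (fun t => f t * t - 4 * Fprim f t) atTop atTop

/-!
If `f t / t ^ n` increases strictly on `(0, ∞)`, then for `0 ≤ a < b` the graph of `f` on `(a, b)`
lies strictly below `c τ ^ n` with `c = f b / b ^ n`. Integrating gives
`(n + 1) ∫_a^b f < c (b ^ (n + 1) - a ^ (n + 1))`, while `f b * b = c b ^ (n + 1)` and
`f a * a ≤ c a ^ (n + 1)`; subtracting yields the strict increase of `f t * t - (n + 1) ∫_0^t f`.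
-/

section PowerQuotient

variable {f : ℝ → ℝ} {n : ℕ}

lemma lt_div_pow_mul_pow_of_strictMonoOn (hf : StrictMonoOn (fun t => f t / t ^ n) (Ioi 0))
    {x b : ℝ} (hx : 0 < x) (hxb : x < b) : f x < f b / b ^ n * x ^ n :=
  (div_lt_iff₀ (pow_pos hx n)).mp (hf hx (hx.trans hxb) hxb)

lemma mul_self_le_div_pow_mul_pow_succ_of_strictMonoOn
    (hf : StrictMonoOn (fun t => f t / t ^ n) (Ioi 0)) {a b : ℝ} (ha : 0 ≤ a) (hab : a < b) :
    f a * a ≤ f b / b ^ n * a ^ (n + 1) := by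
  rcases ha.eq_or_lt with rfl | ha
  · simp
  · rw [pow_succ, ← mul_assoc]
    exact mul_le_mul_of_nonneg_right (lt_div_pow_mul_pow_of_strictMonoOn hf ha hab).le ha.le

lemma mul_integral_lt_of_strictMonoOn_div_pow (hfc : Continuous f)
    (hf : StrictMonoOn (fun t => f t / t ^ n) (Ioi 0)) {a b : ℝ} (ha : 0 ≤ a) (hab : a < b) :
    (n + 1) * ∫ τ in a..b, f τ < f b / b ^ n * (b ^ (n + 1) - a ^ (n + 1)) := by
  set c := f b / b ^ n
  have hpow : Continuous fun τ : ℝ => c * τ ^ n := by fun_prop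
  have hgap : 0 < ∫ τ in a..b, (c * τ ^ n - f τ) :=
    intervalIntegral.intervalIntegral_pos_of_pos_on ((hpow.sub hfc).intervalIntegrable a b)
      (fun x hx => sub_pos.mpr (lt_div_pow_mul_pow_of_strictMonoOn hf (ha.trans_lt hx.1) hx.2))
      hab
  rw [intervalIntegral.integral_sub (hpow.intervalIntegrable a b) (hfc.intervalIntegrable a b),
    intervalIntegral.integral_const_mul, integral_pow, sub_pos] at hgap
  have hn : (0 : ℝ) < n + 1 := by positivity
  calc (n + 1) * ∫ τ in a..b, f τ < (n + 1) * (c * ((b ^ (n + 1) - a ^ (n + 1)) / (n + 1))) :=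
        mul_lt_mul_of_pos_left hgap hn
    _ = c * (b ^ (n + 1) - a ^ (n + 1)) := by field_simp

theorem strictMonoOn_mul_sub_integral_of_strictMonoOn_div_pow (hfc : Continuous f)
    (hf : StrictMonoOn (fun t => f t / t ^ n) (Ioi 0)) :
    StrictMonoOn (fun t => f t * t - (n + 1) * ∫ τ in (0 : ℝ)..t, f τ) (Ici 0) := by
  intro a ha b _ hab
  have hb : 0 < b := lt_of_le_of_lt ha hab
  have hsplit : (∫ τ in (0 : ℝ)..b, f τ) = (∫ τ in (0 : ℝ)..a, f τ) + ∫ τ in a..b, f τ :=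
    (intervalIntegral.integral_add_adjacent_intervals (hfc.intervalIntegrable 0 a)
      (hfc.intervalIntegrable a b)).symm
  have hfb : f b * b = f b / b ^ n * b ^ (n + 1) := by
    rw [pow_succ]
    field_simp
  have hfa := mul_self_le_div_pow_mul_pow_succ_of_strictMonoOn hf ha hab
  have hint := mul_integral_lt_of_strictMonoOn_div_pow hfc hf ha hab
  simp only [hsplit]
  linarith

end PowerQuotient

/-- t ↦ f(t)t − 4F(t) is strictly increasing on [0,∞). -/
theorem stmt3 (f : ℝ → ℝ) (hf1 : F1 f) (hf5 : F5 f) :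
    StrictMonoOn (fun t : ℝ => f t * t - 4 * Fprim f t) (Set.Ici 0) := by
  have h := strictMonoOn_mul_sub_integral_of_strictMonoOn_div_pow (n := 3) hf1 hf5
  norm_num at h
  exact h
end
end

section
/- Assume f : ℝ → ℝ satisfies (f1), (f2) and (f5). Then f(t)t − 4F(t) ≥ 0 for every t ∈ ℝ, where F(t) := ∫₀^t f(τ) dτ. -/
open MeasureTheory Filter Set Real

noncomputable section

/-! For `0 < τ ≤ t` the monotonicity of `f τ / τ ^ 3` gives `f τ ≤ (f t / t ^ 3) τ ^ 3`, and
integrating over `[0, t]` gives `4 F(t) ≤ f(t) t`. Negative `t` reduce to positive ones because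
`F` is even when `f` is odd. -/

lemma succ_mul_integral_le_of_monotoneOn_div_pow {f : ℝ → ℝ} {n : ℕ} {t : ℝ} (ht : 0 < t)
    (hf : IntervalIntegrable f volume 0 t)
    (hmono : MonotoneOn (fun τ => f τ / τ ^ n) (Ioi 0)) :
    (n + 1) * ∫ τ in (0:ℝ)..t, f τ ≤ f t * t := by
  have hle : ∀ τ ∈ Ioo 0 t, f τ ≤ f t / t ^ n * τ ^ n := fun τ hτ =>
    (div_le_iff₀ (pow_pos hτ.1 n)).1 (hmono hτ.1 ht hτ.2.le)
  calc (n + 1) * ∫ τ in (0:ℝ)..t, f τ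
      ≤ (n + 1) * ∫ τ in (0:ℝ)..t, f t / t ^ n * τ ^ n := by
        gcongr
        exact intervalIntegral.integral_mono_on_of_le_Ioo ht.le hf
          ((continuous_const.mul (continuous_pow n)).intervalIntegrable 0 t) hle
    _ = f t * t := by
        rw [intervalIntegral.integral_const_mul, integral_pow]
        field_simp
        ring

lemma Fprim_neg {f : ℝ → ℝ} (hf : F2 f) (t : ℝ) : Fprim f (-t) = Fprim f t := by
  have h : ∫ τ in (0:ℝ)..t, f (-τ) = ∫ τ in -t..0, f τ := by
    rw [intervalIntegral.integral_comp_neg, neg_zero]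
  unfold Fprim
  rw [intervalIntegral.integral_symm, ← h]
  simp only [show ∀ τ, f (-τ) = -f τ from hf, intervalIntegral.integral_neg, neg_neg]

lemma four_mul_Fprim_le {f : ℝ → ℝ} (hf1 : F1 f) (hf5 : F5 f) {t : ℝ} (ht : 0 < t) :
    4 * Fprim f t ≤ f t * t := by
  have := succ_mul_integral_le_of_monotoneOn_div_pow (n := 3) ht
    (hf1.intervalIntegrable 0 t) hf5.monotoneOn
  norm_num at this
  exact this

/-- f(t)t − 4F(t) ≥ 0 for all t. -/
theorem stmt4 (f : ℝ → ℝ) (hf1 : F1 f) (hf2 : F2 f) (hf5 : F5 f) :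
    ∀ t : ℝ, 0 ≤ f t * t - 4 * Fprim f t := by
  intro t
  rcases lt_trichotomy t 0 with ht | rfl | ht
  · have h := four_mul_Fprim_le hf1 hf5 (neg_pos.2 ht)
    rw [Fprim_neg hf2, hf2] at h
    linarith
  · simp [Fprim]
  · linarith [four_mul_Fprim_le hf1 hf5 ht]
end
end

section
/- Assume f : ℝ → ℝ satisfies (f1), (f2) and (f5), and let λ > 0. Then for every u in the Nehari set N one has I(u) = I(u) − (1/4)I'(u)[u] > ∫_{ℝ³} [ (1/4) f(u)u − F(u) ] dx ≥ 0; in particular I(u) > 0 for every u ∈ N, so I is bounded from below by 0 on N. -/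
open MeasureTheory Filter Set Real

noncomputable section

/-! Since `f(t)/t³` increases on `(0, ∞)`, `f(τ) ≤ (f(t)/t³) τ³` for `0 ≤ τ ≤ t`, and integrating gives
`F(t) ≤ f(t) t / 4`; oddness of `f` extends this to all `t`. On the Nehari set the nonlocal terms
cancel in `I(u) - I'(u)[u]/4 = ‖u‖²/4 + ∫ (f(u)u/4 - F(u))`, and `‖u‖² > 0` for `u ≢ 0`. -/

theorem integral_sub_eq_or_of_integrable {α E : Type*} [MeasurableSpace α] {μ : Measure α}
    [NormedAddCommGroup E] [NormedSpace ℝ E] {g h : α → E} (hg : Integrable g μ) :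
    (∫ x, (g x - h x) ∂μ = ∫ x, g x ∂μ - ∫ x, h x ∂μ) ∨
      (∫ x, (g x - h x) ∂μ = 0 ∧ ∫ x, h x ∂μ = 0) := by
  by_cases hh : Integrable h μ
  · exact Or.inl (integral_sub hg hh)
  · have hgh : ¬Integrable (fun x => g x - h x) μ := fun hgh =>
      hh ((hg.sub hgh).congr (ae_of_all _ fun x => by simp))
    exact Or.inr ⟨integral_undef hgh, integral_undef hh⟩

namespace F2

variable {f : ℝ → ℝ}

theorem apply_zero (hf2 : F2 f) : f 0 = 0 := by
  linarith [neg_zero (G := ℝ) ▸ hf2 0]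

theorem Fprim_neg (hf2 : F2 f) (t : ℝ) : Fprim f (-t) = Fprim f t := by
  have hodd : ∀ s, f (-s) = -f s := hf2
  have h := intervalIntegral.integral_comp_neg (a := t) (b := 0) f
  simp only [neg_zero, hodd, intervalIntegral.integral_neg] at h
  rw [Fprim, Fprim, ← h, intervalIntegral.integral_symm, neg_neg]

end F2

theorem F5.apply_le_mul_pow {f : ℝ → ℝ} (hf2 : F2 f) (hf5 : F5 f) {s τ : ℝ}
    (hτ : 0 ≤ τ) (hτs : τ ≤ s) : f τ ≤ f s / s ^ 3 * τ ^ 3 := by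
  rcases hτ.eq_or_lt with rfl | hτ
  · simp [hf2.apply_zero]
  have hle : f τ / τ ^ 3 ≤ f s / s ^ 3 := hf5.monotoneOn hτ (hτ.trans_le hτs) hτs
  calc f τ = f τ / τ ^ 3 * τ ^ 3 := by field_simp
    _ ≤ f s / s ^ 3 * τ ^ 3 := by gcongr

theorem Fprim_le_of_pos {f : ℝ → ℝ} (hf1 : F1 f) (hf2 : F2 f) (hf5 : F5 f) {s : ℝ}
    (hs : 0 < s) : Fprim f s ≤ (1/4) * f s * s :=
  calc Fprim f s ≤ ∫ τ in (0:ℝ)..s, f s / s ^ 3 * τ ^ 3 :=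
        intervalIntegral.integral_mono_on hs.le (hf1.intervalIntegrable 0 s)
          ((continuous_const.mul (continuous_pow 3)).intervalIntegrable 0 s)
          fun _ hτ => hf5.apply_le_mul_pow hf2 hτ.1 hτ.2
    _ = (1/4) * f s * s := by
        rw [intervalIntegral.integral_const_mul, integral_pow]
        field_simp
        ring

theorem Fprim_le_quarter_mul {f : ℝ → ℝ} (hf1 : F1 f) (hf2 : F2 f) (hf5 : F5 f) (t : ℝ) :
    Fprim f t ≤ (1/4) * f t * t := by
  rcases lt_trichotomy t 0 with ht | rfl | ht
  · have h := Fprim_le_of_pos hf1 hf2 hf5 (neg_pos.2 ht)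
    rw [hf2.Fprim_neg, hf2] at h
    linarith
  · simp [Fprim]
  · exact Fprim_le_of_pos hf1 hf2 hf5 ht

theorem H1normSq_pos {u : E3 → ℝ} (hu : MemH1 u) (hnz : ¬AeZero u) : 0 < H1normSq u := by
  have hint : Integrable (fun x => ‖gradient u x‖ ^ 2 + u x ^ 2) :=
    hu.2.integrable_sq.add hu.1.integrable_sq
  refine (integral_nonneg fun x => by positivity).lt_of_ne fun h => hnz ?_
  have h0 := (integral_eq_zero_iff_of_nonneg (fun x => by positivity) hint).1 h.symm
  filter_upwards [h0] with x hx
  have hx : ‖gradient u x‖ ^ 2 + u x ^ 2 = 0 := hx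
  nlinarith [sq_nonneg ‖gradient u x‖, sq_nonneg (u x)]

theorem integral_phiP_mul_sq_nonneg (u : E3 → ℝ) : 0 ≤ ∫ x, phiP u x * u x ^ 2 :=
  integral_nonneg fun _ => mul_nonneg (mul_nonneg (by positivity)
    (integral_nonneg fun _ => by positivity)) (sq_nonneg _)

theorem Iprime_self (f : ℝ → ℝ) (lam : ℝ) (u : E3 → ℝ) :
    Iprime f lam u u =
      H1normSq u + lam * (∫ x, phiP u x * u x ^ 2) - ∫ x, f (u x) * u x := by
  simp only [Iprime, H1normSq, real_inner_self_eq_norm_sq, ← sq, mul_assoc]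

/-- I is bounded below by 0 on the Nehari set. -/
theorem stmt8 (f : ℝ → ℝ) (hf1 : F1 f) (hf2 : F2 f) (hf5 : F5 f)
    (lam : ℝ) (hlam : 0 < lam) :
    ∀ u ∈ nehari f lam,
      energy f lam u = energy f lam u - (1/4) * Iprime f lam u u ∧
      (∫ x, ((1/4) * f (u x) * u x - Fprim f (u x))) < energy f lam u ∧
      0 ≤ (∫ x, ((1/4) * f (u x) * u x - Fprim f (u x))) ∧
      0 < energy f lam u := by
  rintro u ⟨hH1, -, hnz, hN⟩
  have hA := H1normSq_pos hH1 hnz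
  have hB := mul_nonneg hlam.le (integral_phiP_mul_sq_nonneg u)
  have hNe := Iprime_self f lam u ▸ hN
  have hE : energy f lam u = (1/2) * H1normSq u + (lam/4) * (∫ x, phiP u x * u x ^ 2) -
      ∫ x, Fprim f (u x) := rfl
  have hD : Integrable (fun x => f (u x) * u x) := by
    by_contra hD
    rw [integral_undef hD] at hNe
    linarith
  have hJ : 0 ≤ ∫ x, ((1/4) * f (u x) * u x - Fprim f (u x)) :=
    integral_nonneg fun x => sub_nonneg.2 (Fprim_le_quarter_mul hf1 hf2 hf5 (u x))
  have hlt : (∫ x, ((1/4) * f (u x) * u x - Fprim f (u x))) < energy f lam u := by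
    simp only [mul_assoc]
    -- if `F(u)` is not integrable, both it and the difference have Bochner integral `0`
    rcases integral_sub_eq_or_of_integrable (h := fun x => Fprim f (u x))
      (hD.const_mul (1/4)) with h | ⟨h, hC⟩
    · rw [h, integral_const_mul, hE]; linarith
    · rw [h, hE, hC]; linarith
  exact ⟨by rw [hN]; ring, hlt, hJ, hJ.trans_lt hlt⟩
end
end
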